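/- Let ∅ ≠ I' ⊆ ℝⁿ, let X, Y be complex Banach spaces, let 𝓑 be a nonempty collection of nonempty subsets of X whose union is X, and let ρ be a binary relation on Y such that the range of F is contained in the domain of ρ and ρ(y) is a singleton for every y in the range of F. Let 𝒫 = (P,d) be a metric space where P is a set of functions from ℝⁿ to Y containing 0, P is closed under addition and scalar multiplication, and d is translation invariant (d(f+g,h+g) = d(f,h) whenever f,h,f+g,h+g ∈ P), and suppose condition (P) holds: 𝒫₁ = (P₁,d₁) is a metric space with P₁ a set of functions from ℝⁿ to Y containing 0, and there exists c ∈ (0,∞) such that for every f ∈ P and τ ∈ I' the function f(·−τ) belongs to P₁ and ‖f(·−τ)‖_{P₁} ≤ c‖f‖_P. If F : ℝⁿ × X → Y is Bohr (𝓑,I',ρ,𝒫)-almost periodic, then F is Bohr (𝓑,I'−I',𝐈,𝒫₁)-almost periodic, where 𝐈 denotes the identity relation on Y. -/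

import Mathlib

/-!
Take almost periods `τ₁ ∈ B(t₁,l)` and `τ₂ ∈ B(t₂,l)` of `F` for `ε/(2c)`, with witnesses
`y₁, y₂`. Since `ρ` is single-valued on the range of `F`, `y₁ = y₂`, so the witnesses cancel in
the difference of the two `P`-functions, which is `F(· + τ₁) − F(· + τ₂)`. Translation invariance
of `d` bounds its `P`-norm by `ε/c`, and condition (P), applied with the shift `τ₂`, turns it into
`F(· + (τ₁ − τ₂)) − F` with `P₁`-norm at most `ε`. Finally `τ₁ − τ₂ ∈ I' − I'` lies within `2l`
of `t₁ − t₂`.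
-/

noncomputable section

/-- `d` is a metric on the set `P` of functions. -/
def IsMetricOn {α Y : Type*} (P : Set (α → Y)) (d : (α → Y) → (α → Y) → ℝ) : Prop :=
  (∀ f ∈ P, d f f = 0) ∧ (∀ f ∈ P, ∀ g ∈ P, d f g = 0 → f = g) ∧
    (∀ f ∈ P, ∀ g ∈ P, d f g = d g f) ∧
    (∀ f ∈ P, ∀ g ∈ P, ∀ h ∈ P, d f h ≤ d f g + d g h)

/-- Bohr `(𝓑,I',ρ,𝒫)`-almost periodicity of `F : ℝⁿ × X → Y`, where `𝒫 = (P,d)` is a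
metric space of functions from `ℝⁿ` to `Y` with `‖f‖_P := d(f,0)`. -/
def BohrAPFull {n : ℕ} {X Y : Type*} [SubtractionMonoid Y]
    (I' : Set (EuclideanSpace ℝ (Fin n)))
    (𝓑 : Set (Set X)) (ρ : Y → Y → Prop)
    (P : Set (EuclideanSpace ℝ (Fin n) → Y))
    (d : (EuclideanSpace ℝ (Fin n) → Y) → (EuclideanSpace ℝ (Fin n) → Y) → ℝ)
    (F : EuclideanSpace ℝ (Fin n) → X → Y) : Prop :=
  ∀ B ∈ 𝓑, ∀ ε : ℝ, 0 < ε → ∃ l : ℝ, 0 < l ∧ ∀ t₀ ∈ I', ∃ τ ∈ I', ‖τ - t₀‖ ≤ l ∧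
    ∃ y : EuclideanSpace ℝ (Fin n) → X → Y,
      (∀ t, ∀ x ∈ B, ρ (F t x) (y t x)) ∧
      (∀ x ∈ B, (fun t => F (t + τ) x - y t x) ∈ P) ∧
      (∀ x ∈ B, d (fun t => F (t + τ) x - y t x) 0 ≤ ε)

section FunctionSpace

variable {α Y : Type*} [AddCommGroup Y] {P : Set (α → Y)}

lemma sub_mem_of_add_mem_of_smul_mem {𝕜 : Type*} [Ring 𝕜] [Module 𝕜 Y]
    (hPadd : ∀ f ∈ P, ∀ g ∈ P, f + g ∈ P) (hPsmul : ∀ c : 𝕜, ∀ f ∈ P, c • f ∈ P)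
    {f g : α → Y} (hf : f ∈ P) (hg : g ∈ P) : f - g ∈ P := by
  simpa [sub_eq_add_neg] using hPadd f hf _ (hPsmul (-1) g hg)

lemma IsMetricOn.sub_zero_le_add {d : (α → Y) → (α → Y) → ℝ} (hPd : IsMetricOn P d)
    (hP0 : (0 : α → Y) ∈ P)
    (hdtrans : ∀ f g h : α → Y, f ∈ P → h ∈ P → f + g ∈ P → h + g ∈ P →
      d (f + g) (h + g) = d f h)
    {f g : α → Y} (hf : f ∈ P) (hg : g ∈ P) (hfg : f - g ∈ P) :
    d (f - g) 0 ≤ d f 0 + d g 0 :=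
  calc d (f - g) 0 = d f g := by
        simpa using (hdtrans (f - g) g 0 hfg hP0 (by simpa) (by simpa)).symm
    _ ≤ d f 0 + d 0 g := hPd.2.2.2 f hf 0 hP0 g hg
    _ = d f 0 + d g 0 := by rw [hPd.2.2.1 0 hP0 g hg]

end FunctionSpace

lemma translate_sub_translate_comp_sub_right {E Y : Type*} [AddCommGroup E] [AddCommGroup Y]
    (φ y₁ y₂ : E → Y) (hy : ∀ t, y₁ t = y₂ t) (τ₁ τ₂ : E) :
    (fun t => ((fun s => φ (s + τ₁) - y₁ s) - (fun s => φ (s + τ₂) - y₂ s)) (t - τ₂)) =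
      fun t => φ (t + (τ₁ - τ₂)) - φ t := by
  funext t
  simp only [Pi.sub_apply, hy, sub_sub_sub_cancel_right, sub_add_cancel]
  rw [sub_add_eq_add_sub, add_sub_assoc]

theorem stmt9_general {n : ℕ} {X Y : Type*}
    [NormedAddCommGroup Y] [NormedSpace ℂ Y]
    (I' : Set (EuclideanSpace ℝ (Fin n)))
    (𝓑 : Set (Set X))
    (ρ : Y → Y → Prop) (F : EuclideanSpace ℝ (Fin n) → X → Y)
    (hρ : ∀ (t : EuclideanSpace ℝ (Fin n)) (x : X), ∃! y : Y, ρ (F t x) y)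
    (P : Set (EuclideanSpace ℝ (Fin n) → Y))
    (d : (EuclideanSpace ℝ (Fin n) → Y) → (EuclideanSpace ℝ (Fin n) → Y) → ℝ)
    (hP0 : (0 : EuclideanSpace ℝ (Fin n) → Y) ∈ P) (hPd : IsMetricOn P d)
    (hPadd : ∀ f ∈ P, ∀ g ∈ P, f + g ∈ P)
    (hPsmul : ∀ c : ℂ, ∀ f ∈ P, c • f ∈ P)
    (hdtrans : ∀ f g h : EuclideanSpace ℝ (Fin n) → Y,
      f ∈ P → h ∈ P → f + g ∈ P → h + g ∈ P → d (f + g) (h + g) = d f h)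
    (P₁ : Set (EuclideanSpace ℝ (Fin n) → Y))
    (d₁ : (EuclideanSpace ℝ (Fin n) → Y) → (EuclideanSpace ℝ (Fin n) → Y) → ℝ)
    (c : ℝ) (hc : 0 < c)
    (hcondP : ∀ f ∈ P, ∀ τ ∈ I',
      (fun t => f (t - τ)) ∈ P₁ ∧ d₁ (fun t => f (t - τ)) 0 ≤ c * d f 0)
    (hF : BohrAPFull I' 𝓑 ρ P d F) :
    BohrAPFull {s : EuclideanSpace ℝ (Fin n) | ∃ τ₁ ∈ I', ∃ τ₂ ∈ I', s = τ₁ - τ₂}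
      𝓑 (fun y₁ y₂ => y₁ = y₂) P₁ d₁ F := by
  intro B hB ε hε
  obtain ⟨l, hl, hl_periods⟩ := hF B hB (ε / (2 * c)) (by positivity)
  refine ⟨2 * l, by positivity, ?_⟩
  rintro _ ⟨t₁, ht₁, t₂, ht₂, rfl⟩
  obtain ⟨τ₁, hτ₁, hτ₁t₁, y₁, hy₁, hf₁P, hf₁d⟩ := hl_periods t₁ ht₁
  obtain ⟨τ₂, hτ₂, hτ₂t₂, y₂, hy₂, hf₂P, hf₂d⟩ := hl_periods t₂ ht₂
  refine ⟨τ₁ - τ₂, ⟨τ₁, hτ₁, τ₂, hτ₂, rfl⟩, ?_, F, fun _ _ _ => rfl, ?_⟩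
  · rw [← dist_eq_norm, two_mul]
    exact dist_sub_sub_le_of_le (by rwa [dist_eq_norm]) (by rwa [dist_eq_norm])
  have hshift : ∀ x ∈ B, (fun t => F (t + (τ₁ - τ₂)) x - F t x) ∈ P₁ ∧
      d₁ (fun t => F (t + (τ₁ - τ₂)) x - F t x) 0 ≤ ε := by
    intro x hx
    have hy : ∀ t, y₁ t x = y₂ t x := fun t => (hρ t x).unique (hy₁ t x hx) (hy₂ t x hx)
    have hdiff := sub_mem_of_add_mem_of_smul_mem hPadd hPsmul (hf₁P x hx) (hf₂P x hx)
    obtain ⟨hmem, hle⟩ := hcondP _ hdiff τ₂ hτ₂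
    rw [translate_sub_translate_comp_sub_right (F · x) _ _ hy] at hmem hle
    refine ⟨hmem, hle.trans ?_⟩
    calc c * d _ 0 ≤ c * (ε / (2 * c) + ε / (2 * c)) := by
          gcongr
          exact (hPd.sub_zero_le_add hP0 hdtrans (hf₁P x hx) (hf₂P x hx) hdiff).trans
            (add_le_add (hf₁d x hx) (hf₂d x hx))
      _ = ε := by field_simp; ring
  exact ⟨fun x hx => (hshift x hx).1, fun x hx => (hshift x hx).2⟩

/-- If `F : ℝⁿ × X → Y` is Bohr `(𝓑,I',ρ,𝒫)`-almost periodic, `ρ` is single-valued on the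
range of `F`, `P` has a linear structure, `d` is translation invariant and condition (P)
holds, then `F` is Bohr `(𝓑,I'−I',𝐈,𝒫₁)`-almost periodic. -/
theorem stmt9 {n : ℕ} {X Y : Type*}
    [NormedAddCommGroup X] [NormedSpace ℂ X] [CompleteSpace X]
    [NormedAddCommGroup Y] [NormedSpace ℂ Y] [CompleteSpace Y]
    (I' : Set (EuclideanSpace ℝ (Fin n))) (hI' : I'.Nonempty)
    (𝓑 : Set (Set X)) (h𝓑ne : 𝓑.Nonempty) (h𝓑 : ∀ B ∈ 𝓑, B.Nonempty)
    (h𝓑union : ∀ x : X, ∃ B ∈ 𝓑, x ∈ B)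
    (ρ : Y → Y → Prop) (F : EuclideanSpace ℝ (Fin n) → X → Y)
    (hρ : ∀ (t : EuclideanSpace ℝ (Fin n)) (x : X), ∃! y : Y, ρ (F t x) y)
    (P : Set (EuclideanSpace ℝ (Fin n) → Y))
    (d : (EuclideanSpace ℝ (Fin n) → Y) → (EuclideanSpace ℝ (Fin n) → Y) → ℝ)
    (hP0 : (0 : EuclideanSpace ℝ (Fin n) → Y) ∈ P) (hPd : IsMetricOn P d)
    (hPadd : ∀ f ∈ P, ∀ g ∈ P, f + g ∈ P)
    (hPsmul : ∀ c : ℂ, ∀ f ∈ P, c • f ∈ P)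
    (hdtrans : ∀ f g h : EuclideanSpace ℝ (Fin n) → Y,
      f ∈ P → h ∈ P → f + g ∈ P → h + g ∈ P → d (f + g) (h + g) = d f h)
    (P₁ : Set (EuclideanSpace ℝ (Fin n) → Y))
    (d₁ : (EuclideanSpace ℝ (Fin n) → Y) → (EuclideanSpace ℝ (Fin n) → Y) → ℝ)
    (hP₁0 : (0 : EuclideanSpace ℝ (Fin n) → Y) ∈ P₁) (hP₁d : IsMetricOn P₁ d₁)
    (c : ℝ) (hc : 0 < c)
    (hcondP : ∀ f ∈ P, ∀ τ ∈ I',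
      (fun t => f (t - τ)) ∈ P₁ ∧ d₁ (fun t => f (t - τ)) 0 ≤ c * d f 0)
    (hF : BohrAPFull I' 𝓑 ρ P d F) :
    BohrAPFull {s : EuclideanSpace ℝ (Fin n) | ∃ τ₁ ∈ I', ∃ τ₂ ∈ I', s = τ₁ - τ₂}
      𝓑 (fun y₁ y₂ => y₁ = y₂) P₁ d₁ F :=
  stmt9_general I' 𝓑 ρ F hρ P d hP0 hPd hPadd hPsmul hdtrans P₁ d₁ c hc hcondP hF
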